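/- arXiv:1611.01688 — 8 statements merged into one kernel-verified Lean document; each statement's English description precedes it below -/
import Mathlib

section
/- (Per-column stability of Generalized FTPL) Suppose each column of Γ contains at most κ distinct values and any two distinct values appearing in the same column differ by at least δ > 0. Let ε ≥ 0, let D be a (ρ, (1+2ε)/δ)-dispersed probability distribution on ℝ, let α = (α_1,…,α_N) have independent coordinates each with law D, and suppose that for every α the sequence x_1(α),…,x_{T+1}(α) is an ε-approximate Generalized-FTPL trajectory for α, with each map α ↦ x_t(α) measurable. Then for every t ∈ {1,…,T} and every j ∈ {1,…,N}: P[Γ_{x_{t+1}(α),j} ≠ Γ_{x_t(α),j}] ≤ 2κρ. -/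
/-!
Fix every coordinate of `α` except the `j`-th one, `a`. If `x` is ε-optimal at round `s` for `a`
and `x'` is ε-optimal at round `s'` for `a' > a + (1 + 2ε)/δ`, with `s, s' ∈ {t, t + 1}`, then
`Γ_{x,j} ≤ Γ_{x',j}`: a downward jump, which is at least `δ` by the gap condition, would cost
`(a' - a)·δ > 1 + 2ε` in perturbation, more than the payoff of one round plus the two slacks can
make up. Hence for each of the at most `κ` column values `c`, the values of `a` at which the entry
crosses `c` between rounds `t` and `t + 1`, in either direction, lie in an interval of length
`(1 + 2ε)/δ` and have `D`-mass at most `ρ`. Integrating over the remaining coordinates gives `2κρ`.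
-/

open Finset MeasureTheory Function
open scoped ENNReal

theorem le_of_approx_argmax_of_lt {X : Type*} (Φ Ψ g : X → ℝ) {x x' : X} {a a' ε δ C : ℝ}
    (hx : ∀ z, Φ z + a * g z - ε ≤ Φ x + a * g x)
    (hx' : ∀ z, Ψ z + a' * g z - ε ≤ Ψ x' + a' * g x')
    (hdrift : (Φ x - Ψ x) - (Φ x' - Ψ x') ≤ C)
    (hgap : g x' < g x → δ ≤ g x - g x')
    (ha : a < a') (hlt : C + 2 * ε < (a' - a) * δ) : g x ≤ g x' := by
  by_contra! hlt'
  have hmul : (a' - a) * δ ≤ (a' - a) * (g x - g x') :=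
    mul_le_mul_of_nonneg_left (hgap hlt') (sub_nonneg.mpr ha.le)
  linarith [hx x', hx' x]

theorem sum_update_mul {ι : Type*} [Fintype ι] [DecidableEq ι] (v w : ι → ℝ) (j : ι) (a : ℝ) :
    ∑ k, update v j a k * w k = ∑ k, update v j 0 k * w k + a * w j := by
  simp only [Fintype.sum_eq_add_sum_compl j, update_self, zero_mul, zero_add]
  rw [add_comm]
  congr 1
  refine Finset.sum_congr rfl fun k hk => ?_
  rw [update_of_ne (by simpa using hk), update_of_ne (by simpa using hk)]

theorem exists_subset_Icc_of_forall_le_add {U : Set ℝ} {L : ℝ}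
    (hU : ∀ a ∈ U, ∀ b ∈ U, b ≤ a + L) : ∃ m, U ⊆ Set.Icc m (m + L) := by
  rcases U.eq_empty_or_nonempty with rfl | ⟨a₀, ha₀⟩
  · exact ⟨0, Set.empty_subset _⟩
  have hbdd : BddBelow U := ⟨a₀ - L, fun a ha => by linarith [hU a ha a₀ ha₀]⟩
  refine ⟨sInf U, fun a ha => ⟨csInf_le hbdd ha, ?_⟩⟩
  have : a - L ≤ sInf U := le_csInf ⟨a₀, ha₀⟩ fun b hb => by linarith [hU b hb a ha]
  linarith

theorem measurableSet_setOf_of_fibers {Ω X : Type*} [MeasurableSpace Ω] [Countable X]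
    {φ ψ : Ω → X} (hφ : ∀ x, MeasurableSet {ω | φ ω = x})
    (hψ : ∀ x, MeasurableSet {ω | ψ ω = x}) (P : X → X → Prop) :
    MeasurableSet {ω | P (φ ω) (ψ ω)} := by
  let _ : MeasurableSpace X := ⊤
  have hφ' : Measurable φ := measurable_to_countable' hφ
  have hψ' : Measurable ψ := measurable_to_countable' hψ
  exact (hφ'.prodMk hψ') (MeasurableSet.of_discrete (s := {p : X × X | P p.1 p.2}))

section Dispersion

variable {μ : Measure ℝ} {L : ℝ} {r : ℝ≥0∞}

theorem measure_setOf_crossing_le (hμ : ∀ m, μ (Set.Icc m (m + L)) ≤ r) {p q : ℝ → ℝ}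
    (hqp : ∀ a b, a + L < b → q a ≤ p b) (c : ℝ) :
    μ {a | c ≤ q a ∧ p a < c} ≤ r := by
  obtain ⟨m, hm⟩ := exists_subset_Icc_of_forall_le_add (U := {a | c ≤ q a ∧ p a < c}) (L := L)
    fun a ha b hb => by
      by_contra! hab
      exact (hb.2.trans_le ha.1).not_ge (hqp a b hab)
  exact (measure_mono hm).trans (hμ m)

theorem measure_setOf_ne_le_two_mul_card (hμ : ∀ m, μ (Set.Icc m (m + L)) ≤ r)
    {g h : ℝ → ℝ} {V : Finset ℝ} (hg : ∀ a, g a ∈ V) (hh : ∀ a, h a ∈ V)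
    (hgh : ∀ a b, a + L < b → g a ≤ h b) (hhg : ∀ a b, a + L < b → h a ≤ g b) :
    μ {a | h a ≠ g a} ≤ 2 * #V * r := by
  have hcover : {a | h a ≠ g a} ⊆
      ⋃ c ∈ V, ({a | c ≤ g a ∧ h a < c} ∪ {a | c ≤ h a ∧ g a < c}) := by
    intro a ha
    rcases lt_or_gt_of_ne ha with hlt | hgt
    · exact Set.mem_biUnion (hg a) (Or.inl ⟨le_rfl, hlt⟩)
    · exact Set.mem_biUnion (hh a) (Or.inr ⟨le_rfl, hgt⟩)
  calc μ {a | h a ≠ g a}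
      ≤ ∑ c ∈ V, μ ({a | c ≤ g a ∧ h a < c} ∪ {a | c ≤ h a ∧ g a < c}) :=
        (measure_mono hcover).trans (measure_biUnion_finset_le V _)
    _ ≤ ∑ _c ∈ V, 2 * r := by
        gcongr with c
        exact (measure_union_le _ _).trans <| two_mul r ▸
          add_le_add (measure_setOf_crossing_le hμ hgh c) (measure_setOf_crossing_le hμ hhg c)
    _ = 2 * #V * r := by rw [sum_const, nsmul_eq_mul]; ring

end Dispersion

theorem pi_le_of_forall_measure_preimage_update_le {ι : Type*} [Fintype ι] [DecidableEq ι]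
    {X : ι → Type*} [∀ i, MeasurableSpace (X i)] (μ : ∀ i, Measure (X i))
    [∀ i, IsProbabilityMeasure (μ i)] {B : Set (∀ i, X i)} (hB : MeasurableSet B) (j : ι)
    {r : ℝ≥0∞} (hr : ∀ x, μ j (update x j ⁻¹' B) ≤ r) :
    Measure.pi μ B ≤ r := by
  have hind : Measurable (B.indicator (1 : (∀ i, X i) → ℝ≥0∞)) :=
    measurable_one.indicator hB
  have hslice : ∀ x, ∫⁻ a, B.indicator 1 (update x j a) ∂μ j ≤ r := fun x => by
    simp_rw [← Set.indicator_comp_right (update x j), Pi.one_comp]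
    rw [lintegral_indicator_one (hB.preimage (measurable_update x))]
    exact hr x
  have x : ∀ i, X i := fun i => (nonempty_of_isProbabilityMeasure (μ i)).some
  calc Measure.pi μ B = (∫⋯∫⁻_univ, B.indicator 1 ∂μ) x :=
        (lintegral_indicator_one hB).symm.trans (lintegral_eq_lmarginal_univ _)
    _ = (∫⋯∫⁻_(univ.erase j), (fun x => ∫⁻ a, B.indicator 1 (update x j a) ∂μ j) ∂μ) x := by
        rw [lmarginal_erase' _ hind (mem_univ j)]
    _ ≤ (∫⋯∫⁻_(univ.erase j), (fun _ => r) ∂μ) x := lmarginal_mono hslice _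
    _ = r := by simp [lmarginal]

section FTPL

variable {X Y ι : Type*} [Fintype ι] (f : X → Y → ℝ) (y : ℕ → Y) (Γ : X → ι → ℝ) (T : ℕ)
  (ε : ℝ)

def cumPayoff (s : ℕ) (x : X) : ℝ := ∑ τ ∈ Icc 1 (s - 1), f x (y τ)

def IsApproxFTPLTrajectory (α : ι → ℝ) (x : ℕ → X) : Prop :=
  ∀ t, 1 ≤ t → t ≤ T + 1 → ∀ x' : X,
    cumPayoff f y t (x t) + ∑ k, α k * Γ (x t) k ≥ cumPayoff f y t x' + ∑ k, α k * Γ x' k - ε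

theorem cumPayoff_succ {t : ℕ} (ht : 1 ≤ t) (x : X) :
    cumPayoff f y (t + 1) x = cumPayoff f y t x + f x (y t) := by
  obtain ⟨u, rfl⟩ : ∃ u, t = u + 1 := ⟨t - 1, by omega⟩
  exact sum_Icc_succ_top (by omega) _

variable {f}

theorem cumPayoff_drift_le_one (hf : ∀ x y, f x y ∈ Set.Icc 0 1) {t s s' : ℕ} (ht : 1 ≤ t)
    (hs : s = t ∨ s = t + 1) (hs' : s' = t ∨ s' = t + 1) (x x' : X) :
    (cumPayoff f y s x - cumPayoff f y s' x) - (cumPayoff f y s x' - cumPayoff f y s' x') ≤ 1 := by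
  have hx := hf x (y t)
  have hx' := hf x' (y t)
  rw [Set.mem_Icc] at hx hx'
  have hsucc := cumPayoff_succ f y ht x
  have hsucc' := cumPayoff_succ f y ht x'
  rcases hs with rfl | rfl <;> rcases hs' with rfl | rfl <;> linarith

variable {y Γ T ε} [DecidableEq ι]

theorem column_le_of_add_lt (hf : ∀ x y, f x y ∈ Set.Icc 0 1) {j : ι} {δ : ℝ}
    (hgap : ∀ x x', Γ x j ≠ Γ x' j → δ ≤ |Γ x j - Γ x' j|) (hδ : 0 < δ) (hε : 0 ≤ ε)
    {x₀ : ι → ℝ} {a a' : ℝ} {x x' : ℕ → X}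
    (hx : IsApproxFTPLTrajectory f y Γ T ε (update x₀ j a) x)
    (hx' : IsApproxFTPLTrajectory f y Γ T ε (update x₀ j a') x')
    {t s s' : ℕ} (ht1 : 1 ≤ t) (ht2 : t ≤ T) (hs : s = t ∨ s = t + 1) (hs' : s' = t ∨ s' = t + 1)
    (ha : a + (1 + 2 * ε) / δ < a') :
    Γ (x s) j ≤ Γ (x' s') j := by
  have hL : 0 < (1 + 2 * ε) / δ := by positivity
  refine le_of_approx_argmax_of_lt (a := a) (a' := a') (ε := ε) (δ := δ) (C := 1)
    (fun z => cumPayoff f y s z + ∑ k, update x₀ j 0 k * Γ z k)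
    (fun z => cumPayoff f y s' z + ∑ k, update x₀ j 0 k * Γ z k) (Γ · j)
    (fun z => ?_) (fun z => ?_) ?_ (fun hlt => ?_) (by linarith) ?_
  · have := hx s (by omega) (by omega) z
    rw [sum_update_mul _ _ j a, sum_update_mul _ _ j a] at this
    linarith
  · have := hx' s' (by omega) (by omega) z
    rw [sum_update_mul _ _ j a', sum_update_mul _ _ j a'] at this
    linarith
  · linarith [cumPayoff_drift_le_one y hf ht1 hs hs' (x s) (x' s')]
  · simpa only [abs_of_pos (sub_pos.mpr hlt)] using hgap _ _ hlt.ne'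
  · exact (div_lt_iff₀ hδ).mp (by linarith)

end FTPL

theorem per_column_stability_general
    {X Y : Type*} [Fintype X]
    (f : X → Y → ℝ) (hf : ∀ x y, f x y ∈ Set.Icc (0:ℝ) 1)
    (T : ℕ) (y : ℕ → Y)
    (N : ℕ)
    (Γ : X → Fin N → ℝ)
    (κ : ℕ) (δ : ℝ) (hδ : 0 < δ)
    (hcol : ∀ j : Fin N, (Finset.univ.image fun x => Γ x j).card ≤ κ)
    (hgap : ∀ (j : Fin N) (x x' : X), Γ x j ≠ Γ x' j → δ ≤ |Γ x j - Γ x' j|)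
    (ε ρ : ℝ) (hε : 0 ≤ ε)
    (D : Measure ℝ) [IsProbabilityMeasure D]
    (hdisp : ∀ a : ℝ, D (Set.Icc a (a + (1 + 2*ε)/δ)) ≤ ENNReal.ofReal ρ)
    (xtraj : (Fin N → ℝ) → ℕ → X)
    (hmeas : ∀ (t : ℕ) (x₀ : X), MeasurableSet {α : Fin N → ℝ | xtraj α t = x₀})
    (htraj : ∀ (α : Fin N → ℝ) (t : ℕ), 1 ≤ t → t ≤ T + 1 → ∀ x' : X,
      (∑ τ ∈ Finset.Icc 1 (t-1), f (xtraj α t) (y τ)) + (∑ j, α j * Γ (xtraj α t) j) ≥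
      (∑ τ ∈ Finset.Icc 1 (t-1), f x' (y τ)) + (∑ j, α j * Γ x' j) - ε)
    (t : ℕ) (ht1 : 1 ≤ t) (ht2 : t ≤ T) (j : Fin N) :
    (Measure.pi fun _ : Fin N => D)
      {α : Fin N → ℝ | Γ (xtraj α (t+1)) j ≠ Γ (xtraj α t) j} ≤
      ENNReal.ofReal (2 * κ * ρ) := by
  refine pi_le_of_forall_measure_preimage_update_le (fun _ => D)
    (measurableSet_setOf_of_fibers (hmeas (t + 1)) (hmeas t) fun x₁ x₂ => Γ x₁ j ≠ Γ x₂ j) j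
    fun x₀ => ?_
  have hcross {s s' : ℕ} (hs : s = t ∨ s = t + 1) (hs' : s' = t ∨ s' = t + 1) (a b : ℝ)
      (hab : a + (1 + 2 * ε) / δ < b) :
      Γ (xtraj (update x₀ j a) s) j ≤ Γ (xtraj (update x₀ j b) s') j :=
    column_le_of_add_lt hf (hgap j) hδ hε (htraj _) (htraj _) ht1 ht2 hs hs' hab
  have hval (s : ℕ) (a : ℝ) : Γ (xtraj (update x₀ j a) s) j ∈ univ.image fun x => Γ x j :=
    mem_image_of_mem _ (mem_univ _)
  calc D (update x₀ j ⁻¹' {α | Γ (xtraj α (t + 1)) j ≠ Γ (xtraj α t) j})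
      ≤ 2 * #(univ.image fun x => Γ x j) * ENNReal.ofReal ρ :=
        measure_setOf_ne_le_two_mul_card hdisp (hval t) (hval (t + 1))
          (hcross (.inl rfl) (.inr rfl)) (hcross (.inr rfl) (.inl rfl))
    _ ≤ 2 * κ * ENNReal.ofReal ρ := by gcongr; exact_mod_cast hcol j
    _ = ENNReal.ofReal (2 * κ * ρ) := by
        rw [ENNReal.ofReal_mul (by positivity)]
        simp

/-- **Per-column stability of Generalized FTPL.**
If each column of `Γ` has at most `κ` distinct values, distinct values within a column
differ by at least `δ > 0`, the coordinates of `α` are i.i.d. with a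
`(ρ, (1+2ε)/δ)`-dispersed law `D`, and `xtraj α` is an ε-approximate Generalized-FTPL
trajectory for every `α`, then for every round `t ∈ {1,…,T}` and column `j`:
`P[Γ_{x_{t+1}(α), j} ≠ Γ_{x_t(α), j}] ≤ 2κρ`. -/
theorem per_column_stability
    {X Y : Type*} [Fintype X] [Nonempty X]
    (f : X → Y → ℝ) (hf : ∀ x y, f x y ∈ Set.Icc (0:ℝ) 1)
    (T : ℕ) (hT : 1 ≤ T) (y : ℕ → Y)
    (N : ℕ) (hN : 1 ≤ N)
    (Γ : X → Fin N → ℝ) (hΓ : ∀ x j, Γ x j ∈ Set.Icc (0:ℝ) 1)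
    (κ : ℕ) (δ : ℝ) (hδ : 0 < δ)
    (hcol : ∀ j : Fin N, (Finset.univ.image fun x => Γ x j).card ≤ κ)
    (hgap : ∀ (j : Fin N) (x x' : X), Γ x j ≠ Γ x' j → δ ≤ |Γ x j - Γ x' j|)
    (ε ρ : ℝ) (hε : 0 ≤ ε)
    (D : Measure ℝ) [IsProbabilityMeasure D]
    (hdisp : ∀ a : ℝ, D (Set.Icc a (a + (1 + 2*ε)/δ)) ≤ ENNReal.ofReal ρ)
    (xtraj : (Fin N → ℝ) → ℕ → X)
    (hmeas : ∀ (t : ℕ) (x₀ : X), MeasurableSet {α : Fin N → ℝ | xtraj α t = x₀})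
    (htraj : ∀ (α : Fin N → ℝ) (t : ℕ), 1 ≤ t → t ≤ T + 1 → ∀ x' : X,
      (∑ τ ∈ Finset.Icc 1 (t-1), f (xtraj α t) (y τ)) + (∑ j, α j * Γ (xtraj α t) j) ≥
      (∑ τ ∈ Finset.Icc 1 (t-1), f x' (y τ)) + (∑ j, α j * Γ x' j) - ε)
    (t : ℕ) (ht1 : 1 ≤ t) (ht2 : t ≤ T) (j : Fin N) :
    (Measure.pi fun _ : Fin N => D)
      {α : Fin N → ℝ | Γ (xtraj α (t+1)) j ≠ Γ (xtraj α t) j} ≤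
      ENNReal.ofReal (2 * κ * ρ) :=
  per_column_stability_general f hf T y N Γ κ δ hδ hcol hgap ε ρ hε D hdisp xtraj hmeas htraj t ht1
    ht2 j
end

section
/- (Stability Lemma for Generalized FTPL) Suppose Γ is (κ,δ)-admissible, let ε ≥ 0, let D be a (ρ, (1+2ε)/δ)-dispersed probability distribution on ℝ, let α = (α_1,…,α_N) have independent coordinates each with law D, and suppose that for every α the sequence x_1(α),…,x_{T+1}(α) is an ε-approximate Generalized-FTPL trajectory for α, with each map α ↦ x_t(α) measurable. Then E[ Σ_{t=1}^T ( f(x_{t+1}(α), y_t) − f(x_t(α), y_t) ) ] ≤ 2TNκρ. -/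
/-!
Fix a round `t` and a column `j`, and condition on every coordinate of `α` except `α_j = s`.
If the leader switches at round `t` from a row with `Γ_{·j} = v` to one with `Γ_{·j} ≠ v`, then
the best row with entry `v` is `ε`-optimal at round `t` and loses by at most `1 + ε` at round `t+1`
to the new leader, whose entry differs from `v` by at least `δ`. Comparing two such `s` shows that
the set of them, split by the sign of the difference, consists of two pieces of diameter at most
`(1 + 2ε)/δ`, hence of `D`-measure at most `2ρ`. A union bound over the at most `κ` values of
column `j`, the `N` columns (rows of `Γ` are distinct) and the `T` rounds bounds the expected
number of leader changes by `2TNκρ`, and each change costs at most `1`.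
-/

open Finset MeasureTheory
open scoped ENNReal

def IsDispersed (D : Measure ℝ) (ρ L : ℝ) : Prop :=
  ∀ a : ℝ, D (Set.Icc a (a + L)) ≤ ENNReal.ofReal ρ

namespace IsDispersed

variable {D : Measure ℝ} {ρ L : ℝ}

theorem measure_le (hD : IsDispersed D ρ L) {E : Set ℝ}
    (hE : ∀ a ∈ E, ∀ b ∈ E, a ≤ b → b - a ≤ L) : D E ≤ ENNReal.ofReal ρ := by
  rcases E.eq_empty_or_nonempty with rfl | ⟨s₀, hs₀⟩
  · simp
  have hdiam : ∀ a ∈ E, ∀ b ∈ E, b - a ≤ L := fun a ha b hb =>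
    (le_total a b).elim (hE a ha b hb) fun h => by linarith [hE b hb b hb le_rfl]
  have hbdd : BddBelow E := ⟨s₀ - L, fun s hs => by linarith [hdiam s hs s₀ hs₀]⟩
  have hsub : E ⊆ Set.Icc (sInf E) (sInf E + L) := fun s hs => by
    have h : s - L ≤ sInf E := le_csInf ⟨s₀, hs₀⟩ fun s' hs' => by linarith [hdiam s' hs' s hs]
    exact ⟨csInf_le hbdd hs, by linarith⟩
  exact (measure_mono hsub).trans (hD _)

theorem nonneg [IsProbabilityMeasure D] (hD : IsDispersed D ρ L) (hL : 0 < L) : 0 ≤ ρ := by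
  by_contra! hρ
  have hnull : ∀ n : ℤ, D (Set.Icc (0 + n • L) (0 + (n + 1) • L)) = 0 := fun n => by
    rw [add_smul, one_smul, ← add_assoc, ← nonpos_iff_eq_zero, ← ENNReal.ofReal_of_nonpos hρ.le]
    exact hD _
  have hD0 : D Set.univ = 0 := by
    rw [← iUnion_Icc_add_zsmul hL 0]
    exact measure_iUnion_null hnull
  simp at hD0

theorem measure_le_two_mul {X : Type*} {ε δ : ℝ} (hD : IsDispersed D ρ ((1 + 2 * ε) / δ))
    (hδ : 0 < δ) {C G : X → ℝ} {v M : ℝ} (hgap : ∀ z, G z ≠ v → δ ≤ |G z - v|) {S : Set ℝ}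
    (hS : ∀ s ∈ S, (∀ z, C z + s * G z ≤ M + s * v + ε) ∧
      ∃ z, G z ≠ v ∧ M + s * v - 1 - ε ≤ C z + s * G z) :
    D S ≤ 2 * ENNReal.ofReal ρ := by
  have key : ∀ s ∈ S, ∀ s' z, M + s' * v - 1 - ε ≤ C z + s' * G z →
      (s - s') * (G z - v) ≤ 1 + 2 * ε := fun s hs s' z hz => by
    linear_combination (hS s hs).1 z + hz
  let up := {s ∈ S | ∃ z, v < G z ∧ M + s * v - 1 - ε ≤ C z + s * G z}
  let down := {s ∈ S | ∃ z, G z < v ∧ M + s * v - 1 - ε ≤ C z + s * G z}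
  have hup : D up ≤ ENNReal.ofReal ρ := hD.measure_le fun a ⟨_, z, hz, haz⟩ b ⟨hb, _⟩ hab => by
    have hδz : δ ≤ G z - v := by simpa [abs_of_pos (sub_pos.2 hz)] using hgap z hz.ne'
    rw [le_div_iff₀ hδ]
    nlinarith [key b hb a z haz, mul_le_mul_of_nonneg_left hδz (sub_nonneg.2 hab)]
  have hdown : D down ≤ ENNReal.ofReal ρ := hD.measure_le fun a ⟨ha, _⟩ b ⟨_, z, hz, hbz⟩ hab => by
    have hδz : δ ≤ v - G z := by simpa [abs_of_neg (sub_neg.2 hz)] using hgap z hz.ne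
    rw [le_div_iff₀ hδ]
    nlinarith [key a ha b z hbz, mul_le_mul_of_nonneg_left hδz (sub_nonneg.2 hab)]
  have hsplit : S ⊆ up ∪ down := fun s hs => by
    obtain ⟨z, hzv, hz⟩ := (hS s hs).2
    exact hzv.lt_or_gt.elim (fun h => Or.inr ⟨hs, z, h, hz⟩) fun h => Or.inl ⟨hs, z, h, hz⟩
  calc D S ≤ D up + D down := (measure_mono hsplit).trans (measure_union_le _ _)
    _ ≤ 2 * ENNReal.ofReal ρ := by rw [two_mul]; exact add_le_add hup hdown

end IsDispersed

theorem measure_pi_le_of_forall_measure_update_preimage_le {ι : Type*} [Fintype ι] [DecidableEq ι]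
    {E : ι → Type*} [∀ i, MeasurableSpace (E i)] {μ : ∀ i, Measure (E i)}
    [∀ i, IsProbabilityMeasure (μ i)] {B : Set (∀ i, E i)} (hB : MeasurableSet B) (j : ι)
    {c : ℝ≥0∞} (h : ∀ x, μ j (Function.update x j ⁻¹' B) ≤ c) : Measure.pi μ B ≤ c := by
  rw [← lintegral_indicator_one hB]
  calc ∫⁻ x, B.indicator 1 x ∂Measure.pi μ ≤ ∫⁻ _, c ∂Measure.pi μ := by
        refine lintegral_le_of_lmarginal_le {j} (measurable_one.indicator hB) measurable_const
          fun x => ?_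
        rw [lmarginal_singleton, lmarginal_singleton]
        simp_rw [← Set.indicator_comp_right, Pi.one_comp]
        rw [lintegral_indicator_one (measurable_update x hB)]
        simpa using h x
    _ = c := by simp

section Perturbation

variable {X ι : Type*} [Fintype ι]

def IsApproxMax (Φ : X → ℝ) (ε : ℝ) (x : X) : Prop :=
  ∀ x', Φ x' - ε ≤ Φ x

def perturbed (F : X → ℝ) (Γ : X → ι → ℝ) (α : ι → ℝ) (x : X) : ℝ :=
  F x + ∑ j, α j * Γ x j

theorem perturbed_add (F g : X → ℝ) (Γ : X → ι → ℝ) (α : ι → ℝ) (x : X) :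
    perturbed (F + g) Γ α x = perturbed F Γ α x + g x := by
  simp only [perturbed, Pi.add_apply]
  ring

theorem perturbed_update [DecidableEq ι] (F : X → ℝ) (Γ : X → ι → ℝ) (α : ι → ℝ) (j : ι)
    (s : ℝ) (x : X) :
    perturbed F Γ (Function.update α j s) x =
      perturbed F Γ (Function.update α j 0) x + s * Γ x j := by
  simp only [perturbed, Fintype.sum_eq_add_sum_compl j, Function.update_self, zero_mul, zero_add]
  have hrest : ∀ t : ℝ, ∑ i ∈ {j}ᶜ, Function.update α j t i * Γ x i = ∑ i ∈ {j}ᶜ, α i * Γ x i :=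
    fun t => sum_congr rfl fun i hi => by rw [Function.update_of_ne (by simpa using hi)]
  rw [hrest, hrest]
  ring

end Perturbation

section Stability

variable {X ι : Type*} [MeasurableSpace X] [DiscreteMeasurableSpace X] [Fintype ι] [DecidableEq ι]
  {D : Measure ℝ} [IsProbabilityMeasure D] {ρ ε δ : ℝ} {Γ : X → ι → ℝ} {F g : X → ℝ}
  {a b : (ι → ℝ) → X}

theorem measure_approxMax_column_switch_le [Finite X] (hD : IsDispersed D ρ ((1 + 2 * ε) / δ))
    (hδ : 0 < δ) {j : ι} {v : ℝ} (hv : ∃ x, Γ x j = v) (hgap : ∀ x, Γ x j ≠ v → δ ≤ |Γ x j - v|)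
    (hg : ∀ x, g x ∈ Set.Icc (0 : ℝ) 1) (ha_meas : Measurable a) (hb_meas : Measurable b)
    (ha : ∀ α, IsApproxMax (perturbed F Γ α) ε (a α))
    (hb : ∀ α, IsApproxMax (perturbed (F + g) Γ α) ε (b α)) :
    Measure.pi (fun _ : ι => D) {α | Γ (a α) j = v ∧ Γ (b α) j ≠ v} ≤ 2 * ENNReal.ofReal ρ := by
  refine measure_pi_le_of_forall_measure_update_preimage_le (μ := fun _ => D)
    ((ha_meas (.of_discrete (s := {x | Γ x j = v}))).inter
      (hb_meas (.of_discrete (s := {x | Γ x j ≠ v})))) j fun α => ?_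
  set C := perturbed F Γ (Function.update α j 0)
  have : Nonempty {x // Γ x j = v} := hv.elim fun x hx => ⟨⟨x, hx⟩⟩
  obtain ⟨⟨w, hwv⟩, hw⟩ := Finite.exists_max fun x : {x // Γ x j = v} => C x
  refine hD.measure_le_two_mul hδ (C := C) (M := C w) hgap fun s hs => ?_
  set α' := Function.update α j s
  obtain ⟨hsa, hsb⟩ : Γ (a α') j = v ∧ Γ (b α') j ≠ v := hs
  have hslice : ∀ x, perturbed F Γ α' x = C x + s * Γ x j := perturbed_update F Γ α j s
  refine ⟨fun z => ?_, b α', hsb, ?_⟩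
  · have hz := ha α' z
    rw [hslice, hslice, hsa] at hz
    linarith [hw ⟨_, hsa⟩]
  · have hwb := hb α' w
    rw [perturbed_add, perturbed_add, hslice, hslice, hwv] at hwb
    linarith [(hg w).1, (hg (b α')).2]

theorem measureReal_approxMax_ne_le [Fintype X] (hε : 0 ≤ ε)
    (hD : IsDispersed D ρ ((1 + 2 * ε) / δ)) (hδ : 0 < δ) {κ : ℕ}
    (hrows : ∀ x x' : X, x ≠ x' → ∃ j, Γ x j ≠ Γ x' j)
    (hcol : ∀ j, (univ.image fun x => Γ x j).card ≤ κ)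
    (hgap : ∀ j x x', Γ x j ≠ Γ x' j → δ ≤ |Γ x j - Γ x' j|)
    (hg : ∀ x, g x ∈ Set.Icc (0 : ℝ) 1) (ha_meas : Measurable a) (hb_meas : Measurable b)
    (ha : ∀ α, IsApproxMax (perturbed F Γ α) ε (a α))
    (hb : ∀ α, IsApproxMax (perturbed (F + g) Γ α) ε (b α)) :
    (Measure.pi fun _ : ι => D).real {α | a α ≠ b α} ≤ 2 * Fintype.card ι * κ * ρ := by
  set μ := Measure.pi fun _ : ι => D
  have hρ : 0 ≤ ρ := hD.nonneg (div_pos (by linarith) hδ)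
  have hvalue : ∀ j, ∀ v ∈ univ.image fun x => Γ x j,
      μ.real {α | Γ (a α) j = v ∧ Γ (b α) j ≠ v} ≤ 2 * ρ := fun j v hv => by
    obtain ⟨x₀, -, rfl⟩ := mem_image.1 hv
    refine ENNReal.toReal_le_of_le_ofReal (by positivity) ?_
    rw [ENNReal.ofReal_mul zero_le_two, ENNReal.ofReal_ofNat]
    exact measure_approxMax_column_switch_le hD hδ ⟨x₀, rfl⟩ (fun x hx => hgap j x x₀ hx) hg
      ha_meas hb_meas ha hb
  have hcolumn : ∀ j, μ.real {α | Γ (a α) j ≠ Γ (b α) j} ≤ κ * (2 * ρ) := fun j => calc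
    μ.real {α | Γ (a α) j ≠ Γ (b α) j}
        ≤ μ.real (⋃ v ∈ univ.image fun x => Γ x j, {α | Γ (a α) j = v ∧ Γ (b α) j ≠ v}) :=
      measureReal_mono
        (fun α hα => Set.mem_biUnion (mem_image_of_mem _ (mem_univ (a α))) ⟨rfl, Ne.symm hα⟩)
        (measure_ne_top _ _)
    _ ≤ ∑ v ∈ univ.image fun x => Γ x j, μ.real {α | Γ (a α) j = v ∧ Γ (b α) j ≠ v} :=
      measureReal_biUnion_finset_le _ _
    _ ≤ (univ.image fun x => Γ x j).card * (2 * ρ) := by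
      simpa using sum_le_sum (hvalue j)
    _ ≤ κ * (2 * ρ) := by gcongr; exact hcol j
  calc μ.real {α | a α ≠ b α} ≤ μ.real (⋃ j, {α | Γ (a α) j ≠ Γ (b α) j}) :=
        measureReal_mono (fun α hα => Set.mem_iUnion.2 (hrows _ _ hα)) (measure_ne_top _ _)
    _ ≤ ∑ j, μ.real {α | Γ (a α) j ≠ Γ (b α) j} := measureReal_iUnion_fintype_le _
    _ ≤ ∑ _j : ι, κ * (2 * ρ) := sum_le_sum fun j _ => hcolumn j
    _ = 2 * Fintype.card ι * κ * ρ := by simp; ring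

end Stability

section Integral

variable {Ω X : Type*} [MeasurableSpace Ω] [MeasurableSpace X] [DiscreteMeasurableSpace X]
  {μ : Measure Ω} [IsFiniteMeasure μ] {g : X → ℝ} {a b : Ω → X}

theorem integrable_comp_of_mem_Icc (hg : ∀ x, g x ∈ Set.Icc (0 : ℝ) 1) (ha : Measurable a) :
    Integrable (fun ω => g (a ω)) μ :=
  .of_bound (Measurable.of_discrete.comp ha).aestronglyMeasurable 1
    (ae_of_all _ fun ω => by
      rw [Real.norm_of_nonneg (hg (a ω)).1]
      exact (hg (a ω)).2)

theorem integral_sub_comp_le_measureReal_ne [Countable X] (hg : ∀ x, g x ∈ Set.Icc (0 : ℝ) 1)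
    (ha : Measurable a) (hb : Measurable b) :
    ∫ ω, g (b ω) - g (a ω) ∂μ ≤ μ.real {ω | a ω ≠ b ω} := by
  have hne : MeasurableSet {ω | a ω ≠ b ω} := (measurableSet_eq_fun ha hb).compl
  rw [← integral_indicator_one hne]
  refine integral_mono ((integrable_comp_of_mem_Icc hg hb).sub (integrable_comp_of_mem_Icc hg ha))
    ((integrable_const 1).indicator hne) fun ω => ?_
  by_cases h : a ω = b ω
  · simp [h]
  · rw [Set.indicator_of_mem h, Pi.one_apply]
    linarith [(hg (b ω)).2, (hg (a ω)).1]

end Integral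

theorem sum_Icc_one_eq_sum_Icc_one_sub_one_add {M : Type*} [AddCommMonoid M] {t : ℕ}
    (ht : 1 ≤ t) (h : ℕ → M) : ∑ τ ∈ Icc 1 t, h τ = ∑ τ ∈ Icc 1 (t - 1), h τ + h t := by
  conv_lhs => rw [← Nat.sub_add_cancel ht]
  rw [sum_Icc_succ_top (by omega), Nat.sub_add_cancel ht]

theorem ftpl_stability_general
    {X Y : Type*} [Fintype X]
    (f : X → Y → ℝ) (hf : ∀ x y, f x y ∈ Set.Icc (0:ℝ) 1)
    (T : ℕ) (y : ℕ → Y)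
    (N : ℕ)
    (Γ : X → Fin N → ℝ)
    (κ : ℕ) (δ : ℝ) (hδ : 0 < δ)
    -- (κ,δ)-admissibility:
    (hrows : ∀ x x' : X, x ≠ x' → ∃ j, Γ x j ≠ Γ x' j)
    (hcol : ∀ j : Fin N, (Finset.univ.image fun x => Γ x j).card ≤ κ)
    (hgap : ∀ (j : Fin N) (x x' : X), Γ x j ≠ Γ x' j → δ ≤ |Γ x j - Γ x' j|)
    (ε ρ : ℝ) (hε : 0 ≤ ε)
    (D : Measure ℝ) [IsProbabilityMeasure D]
    (hdisp : ∀ a : ℝ, D (Set.Icc a (a + (1 + 2*ε)/δ)) ≤ ENNReal.ofReal ρ)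
    (xtraj : (Fin N → ℝ) → ℕ → X)
    (hmeas : ∀ (t : ℕ) (x₀ : X), MeasurableSet {α : Fin N → ℝ | xtraj α t = x₀})
    (htraj : ∀ (α : Fin N → ℝ) (t : ℕ), 1 ≤ t → t ≤ T + 1 → ∀ x' : X,
      (∑ τ ∈ Finset.Icc 1 (t-1), f (xtraj α t) (y τ)) + (∑ j, α j * Γ (xtraj α t) j) ≥
      (∑ τ ∈ Finset.Icc 1 (t-1), f x' (y τ)) + (∑ j, α j * Γ x' j) - ε) :
    ∫ α, (∑ t ∈ Finset.Icc 1 T, (f (xtraj α (t+1)) (y t) - f (xtraj α t) (y t)))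
        ∂(Measure.pi fun _ : Fin N => D) ≤ 2 * T * N * κ * ρ := by
  set μ := Measure.pi fun _ : Fin N => D
  let _ : MeasurableSpace X := ⊤
  have hx : ∀ t, Measurable fun α => xtraj α t := fun t => measurable_to_countable' (hmeas t)
  have hround : ∀ t ∈ Icc 1 T, μ.real {α | xtraj α t ≠ xtraj α (t + 1)} ≤ 2 * N * κ * ρ :=
    fun t ht => by
      obtain ⟨ht1, htT⟩ := mem_Icc.1 ht
      simpa using measureReal_approxMax_ne_le hε hdisp hδ hrows hcol hgap (hf · (y t)) (hx t)
        (hx (t + 1)) (fun α => htraj α t ht1 (by omega)) fun α x' => by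
          have h := htraj α (t + 1) (by omega) (by omega) x'
          rwa [Nat.add_sub_cancel, sum_Icc_one_eq_sum_Icc_one_sub_one_add ht1,
            sum_Icc_one_eq_sum_Icc_one_sub_one_add ht1] at h
  calc ∫ α, (∑ t ∈ Icc 1 T, (f (xtraj α (t+1)) (y t) - f (xtraj α t) (y t))) ∂μ
      = ∑ t ∈ Icc 1 T, ∫ α, f (xtraj α (t+1)) (y t) - f (xtraj α t) (y t) ∂μ :=
        integral_finsetSum _ fun t _ => (integrable_comp_of_mem_Icc (hf · (y t)) (hx (t + 1))).sub
          (integrable_comp_of_mem_Icc (hf · (y t)) (hx t))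
    _ ≤ ∑ t ∈ Icc 1 T, μ.real {α | xtraj α t ≠ xtraj α (t + 1)} :=
        sum_le_sum fun t _ => integral_sub_comp_le_measureReal_ne (hf · (y t)) (hx t) (hx (t + 1))
    _ ≤ ∑ _t ∈ Icc 1 T, 2 * N * κ * ρ := sum_le_sum hround
    _ = 2 * T * N * κ * ρ := by simp; ring

/-- **Stability Lemma for Generalized FTPL.**
If `Γ` is `(κ,δ)`-admissible, the coordinates of `α` are i.i.d. with a
`(ρ, (1+2ε)/δ)`-dispersed law `D`, and `xtraj α` is an ε-approximate Generalized-FTPL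
trajectory for every `α`, then
`E[ Σ_{t=1}^T ( f(x_{t+1}(α), y_t) − f(x_t(α), y_t) ) ] ≤ 2TNκρ`. -/
theorem ftpl_stability
    {X Y : Type*} [Fintype X] [Nonempty X]
    (f : X → Y → ℝ) (hf : ∀ x y, f x y ∈ Set.Icc (0:ℝ) 1)
    (T : ℕ) (hT : 1 ≤ T) (y : ℕ → Y)
    (N : ℕ) (hN : 1 ≤ N)
    (Γ : X → Fin N → ℝ) (hΓ : ∀ x j, Γ x j ∈ Set.Icc (0:ℝ) 1)
    (κ : ℕ) (δ : ℝ) (hδ : 0 < δ)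
    -- (κ,δ)-admissibility:
    (hrows : ∀ x x' : X, x ≠ x' → ∃ j, Γ x j ≠ Γ x' j)
    (hcol : ∀ j : Fin N, (Finset.univ.image fun x => Γ x j).card ≤ κ)
    (hgap : ∀ (j : Fin N) (x x' : X), Γ x j ≠ Γ x' j → δ ≤ |Γ x j - Γ x' j|)
    (ε ρ : ℝ) (hε : 0 ≤ ε)
    (D : Measure ℝ) [IsProbabilityMeasure D]
    (hdisp : ∀ a : ℝ, D (Set.Icc a (a + (1 + 2*ε)/δ)) ≤ ENNReal.ofReal ρ)
    (xtraj : (Fin N → ℝ) → ℕ → X)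
    (hmeas : ∀ (t : ℕ) (x₀ : X), MeasurableSet {α : Fin N → ℝ | xtraj α t = x₀})
    (htraj : ∀ (α : Fin N → ℝ) (t : ℕ), 1 ≤ t → t ≤ T + 1 → ∀ x' : X,
      (∑ τ ∈ Finset.Icc 1 (t-1), f (xtraj α t) (y τ)) + (∑ j, α j * Γ (xtraj α t) j) ≥
      (∑ τ ∈ Finset.Icc 1 (t-1), f x' (y τ)) + (∑ j, α j * Γ x' j) - ε) :
    ∫ α, (∑ t ∈ Finset.Icc 1 T, (f (xtraj α (t+1)) (y t) - f (xtraj α t) (y t)))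
        ∂(Measure.pi fun _ : Fin N => D) ≤ 2 * T * N * κ * ρ :=
  ftpl_stability_general f hf T y N Γ κ δ hδ hrows hcol hgap ε ρ hε D hdisp xtraj hmeas htraj
end

section
/- (Implementability of binary-encoding columns for VCG reserves) For every integer m ≥ 1 and every natural number β, there exist nonnegative real numbers w_1,…,w_m such that for all z, z' ∈ {1,…,m}: bit_β(z) − bit_β(z') = Σ_{h=1}^m w_h · ( (z/m)·1[h ≥ z] − (z'/m)·1[h ≥ z'] ). -/
open Finset

lemma telescope_Ico (f : ℕ → ℝ) (a b : ℕ) (hab : a ≤ b) :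
    ∑ i ∈ Finset.Ico a b, (f i - f (i + 1)) = f a - f b := by
  induction b with
  | zero => interval_cases a; simp
  | succ n ih =>
    rcases Nat.lt_or_ge a (n + 1) with h | h
    · rw [Finset.sum_Ico_succ_top (by omega), ih (by omega)]; ring
    · have : a = n + 1 := by omega
      simp [this]

/-- **Implementability of binary-encoding columns for VCG reserves.**
For every `m ≥ 1` and bit position `β`, there exist nonnegative weights `w 1, …, w m`
such that for all `z, z' ∈ {1,…,m}`:
`bit_β(z) − bit_β(z') = Σ_{h=1}^m w_h ((z/m)·1[h ≥ z] − (z'/m)·1[h ≥ z'])`,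
where `bit_β(z) = (z / 2^β) % 2` is the β-th binary digit of `z`. -/
theorem vcg_bit_column_implementable (m : ℕ) (hm : 1 ≤ m) (β : ℕ) :
    ∃ w : ℕ → ℝ,
      (∀ h ∈ Finset.Icc 1 m, 0 ≤ w h) ∧
      (∀ z ∈ Finset.Icc 1 m, ∀ z' ∈ Finset.Icc 1 m,
        ((z / 2^β % 2 : ℕ) : ℝ) - ((z' / 2^β % 2 : ℕ) : ℝ) =
          ∑ h ∈ Finset.Icc 1 m, w h *
            ((if z ≤ h then (z : ℝ) / m else 0) - (if z' ≤ h then (z' : ℝ) / m else 0))) := by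
  set bit : ℕ → ℝ := fun z => ((z / 2^β % 2 : ℕ) : ℝ) with hbit
  have bit0 : ∀ z, 0 ≤ bit z := fun z => Nat.cast_nonneg _
  have bit1 : ∀ z, bit z ≤ 1 := by
    intro z
    have : z / 2^β % 2 ≤ 1 := Nat.lt_succ_iff.mp (Nat.mod_lt _ (by norm_num))
    show ((z / 2^β % 2 : ℕ) : ℝ) ≤ 1
    exact_mod_cast this
  set G : ℕ → ℝ := fun z => if z ≤ m then m * (bit z + m) / z else 0 with hG
  have hmr : (1:ℝ) ≤ m := by exact_mod_cast hm
  refine ⟨fun h => G h - G (h + 1), ?_, ?_⟩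
  · intro h hh
    simp only [mem_Icc] at hh
    obtain ⟨h1, h2⟩ := hh
    have hhr1 : (1:ℝ) ≤ h := by exact_mod_cast h1
    have hhrm : (h:ℝ) ≤ m := by exact_mod_cast h2
    show 0 ≤ G h - G (h + 1)
    by_cases hlt : h + 1 ≤ m
    · have hGh : G h = m * (bit h + m) / h := by simp [hG, h2]
      have hGh1 : G (h + 1) = m * (bit (h + 1) + m) / ((h:ℝ) + 1) := by
        simp [hG, hlt]
      rw [hGh, hGh1, sub_nonneg, div_le_div_iff₀ (by linarith) (by linarith)]
      have hb0 := bit0 h; have hb1' := bit1 (h + 1); have hb0' := bit0 (h + 1)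
      have hb1 := bit1 h
      have hm0 : (0:ℝ) ≤ m := by linarith
      nlinarith [mul_nonneg hm0 (sub_nonneg.mpr hhrm),
        mul_nonneg (mul_nonneg hm0 hb0) (by linarith : (0:ℝ) ≤ (h:ℝ) + 1),
        mul_nonneg (mul_nonneg hm0 (by linarith : (0:ℝ) ≤ (h:ℝ))) (sub_nonneg.mpr hb1')]
    · have h0 : G (h + 1) = 0 := by simp [hG, hlt]
      rw [h0, sub_zero, hG]
      simp only [h2, if_true]
      have := bit0 h
      positivity
  · have key : ∀ z ∈ Finset.Icc 1 m,
        ∑ h ∈ Finset.Icc 1 m, (G h - G (h + 1)) * (if z ≤ h then (z:ℝ) / m else 0)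
          = bit z + m := by
      intro z hz
      simp only [mem_Icc] at hz
      obtain ⟨hz1, hz2⟩ := hz
      have hzr1 : (1:ℝ) ≤ z := by exact_mod_cast hz1
      have hzrm : (z:ℝ) ≤ m := by exact_mod_cast hz2
      have step1 : ∀ h ∈ Finset.Icc 1 m,
          (G h - G (h + 1)) * (if z ≤ h then (z:ℝ) / m else 0)
            = if z ≤ h then (G h - G (h + 1)) * ((z:ℝ) / m) else 0 := by
        intro h _; split <;> simp
      rw [Finset.sum_congr rfl step1, ← Finset.sum_filter]
      have hfilt : (Finset.Icc 1 m).filter (fun h => z ≤ h) = Finset.Icc z m := by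
        ext x; simp [Finset.mem_filter, Finset.mem_Icc]; omega
      rw [hfilt, ← Finset.sum_mul, ← Finset.Ico_add_one_right_eq_Icc, telescope_Ico G z (m + 1) (by omega)]
      have hGm1 : G (m + 1) = 0 := by simp [hG]
      have hGz : G z = m * (bit z + m) / z := by simp [hG, hz2]
      rw [hGm1, hGz, sub_zero]
      field_simp
    intro z hz z' hz'
    have expand : ∀ h ∈ Finset.Icc 1 m,
        (G h - G (h + 1)) *
          ((if z ≤ h then (z : ℝ) / m else 0) - (if z' ≤ h then (z' : ℝ) / m else 0))
        = (G h - G (h + 1)) * (if z ≤ h then (z:ℝ) / m else 0)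
          - (G h - G (h + 1)) * (if z' ≤ h then (z':ℝ) / m else 0) := by
      intro h _; ring
    rw [Finset.sum_congr rfl expand, Finset.sum_sub_distrib, key z hz, key z' hz']
    show bit z - bit z' = _
    ring
end

section
/- (Pseudo-complexity of the binary-encoding implementation) For every integer m ≥ 1 and every natural number β, there exist nonnegative real numbers w_1,…,w_m such that for all z, z' ∈ {1,…,m}: bit_β(z) − bit_β(z') = Σ_{h=1}^m w_h · ( (z/m)·1[h ≥ z] − (z'/m)·1[h ≥ z'] ), and moreover Σ_{h=1}^m w_h ≤ 2m(m−1) + m. -/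
/-!
Put `w h = T h - T (h + 1)` for a tail function `T` vanishing past `m`. Then
`∑ h ≥ z, w h = T z`, so the weighted threshold sum at `z` equals `(z / m) T z`, and it suffices
to make this equal `bit z + (m - 1)`: the common shift `m - 1` cancels in differences. Taking
`T z = m (bit z + m - 1) / z`, the shift dominates the bit's oscillation by enough to make `T`
antitone on `1, …, m + 1`, i.e. all weights nonnegative, and the total weight is
`T 1 ≤ m ^ 2 ≤ 2m(m - 1) + m`.
-/

open Finset

lemma Finset.sum_Icc_sub_succ {M : Type*} [AddCommGroup M] (T : ℕ → M) {a n : ℕ}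
    (h : a ≤ n + 1) : ∑ i ∈ Icc a n, (T i - T (i + 1)) = T a - T (n + 1) := by
  rw [← Ico_add_one_right_eq_Icc, ← neg_sub (T (n + 1)), ← sum_Ico_sub T h, ← sum_neg_distrib]
  simp only [neg_sub]

lemma Finset.sum_Icc_one_ite_le {M : Type*} [AddCommMonoid M] (g : ℕ → M) {z : ℕ} (hz : 1 ≤ z)
    (m : ℕ) : ∑ h ∈ Icc 1 m, (if z ≤ h then g h else 0) = ∑ h ∈ Icc z m, g h := by
  rw [← sum_filter]
  congr 1
  ext h
  simp only [mem_filter, mem_Icc]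
  omega

section ColumnTail

variable (m : ℕ) (f : ℕ → ℝ)

noncomputable def columnTail (z : ℕ) : ℝ :=
  if z ≤ m then m * (f z + m - 1) / z else 0

variable {m f}

lemma columnTail_of_lt {z : ℕ} (hz : m < z) : columnTail m f z = 0 :=
  if_neg (Nat.not_le.2 hz)

lemma div_mul_columnTail {z : ℕ} (hz : z ∈ Icc 1 m) : z / m * columnTail m f z = f z + m - 1 := by
  obtain ⟨hz1, hzm⟩ := mem_Icc.1 hz
  have hz0 : (z : ℝ) ≠ 0 := by positivity
  have hm0 : (m : ℝ) ≠ 0 := Nat.cast_ne_zero.2 (by omega)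
  rw [columnTail, if_pos hzm]
  field_simp

lemma columnTail_succ_le (hf : ∀ z ∈ Icc 1 m, f z ∈ Set.Icc (0 : ℝ) 1) {h : ℕ}
    (hh : h ∈ Icc 1 m) : columnTail m f (h + 1) ≤ columnTail m f h := by
  obtain ⟨hh1, hhm⟩ := mem_Icc.1 hh
  have hfh := (hf h hh).1
  have hh0 : (0 : ℝ) < h := by exact_mod_cast hh1
  rw [columnTail, columnTail, if_pos hhm]
  split_ifs with hsucc
  · have hfs := (hf (h + 1) (mem_Icc.2 ⟨by omega, hsucc⟩)).2
    have hhm' : (h : ℝ) + 1 ≤ m := by exact_mod_cast hsucc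
    push_cast
    rw [div_le_div_iff₀ (by positivity) hh0]
    -- `(m - 1)(h + 1) ≥ m h` exactly when `h ≤ m - 1`, which absorbs the bit difference
    have key : (f (h + 1) + m - 1) * h ≤ (f h + m - 1) * (h + 1) := by
      nlinarith [mul_nonneg hfh hh0.le, mul_le_of_le_one_left hh0.le hfs]
    nlinarith [mul_le_mul_of_nonneg_left key m.cast_nonneg]
  · have hm1 : (1 : ℝ) ≤ m := by exact_mod_cast hh1.trans hhm
    exact div_nonneg (mul_nonneg m.cast_nonneg (by linarith)) hh0.le

lemma columnTail_one_le (hf : ∀ z ∈ Icc 1 m, f z ∈ Set.Icc (0 : ℝ) 1) :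
    columnTail m f 1 ≤ (m : ℝ) ^ 2 := by
  rcases Nat.eq_zero_or_pos m with rfl | hm
  · simp [columnTail]
  · have hf1 := (hf 1 (mem_Icc.2 ⟨le_rfl, hm⟩)).2
    rw [columnTail, if_pos (show 1 ≤ m from hm), Nat.cast_one, div_one]
    nlinarith [m.cast_nonneg (α := ℝ)]

theorem exists_nonneg_weights_threshold_sum_eq (hf : ∀ z ∈ Icc 1 m, f z ∈ Set.Icc (0 : ℝ) 1) :
    ∃ w : ℕ → ℝ, (∀ h ∈ Icc 1 m, 0 ≤ w h) ∧
      (∀ z ∈ Icc 1 m,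
        ∑ h ∈ Icc 1 m, w h * (if z ≤ h then (z : ℝ) / m else 0) = f z + m - 1) ∧
      ∑ h ∈ Icc 1 m, w h ≤ (m : ℝ) ^ 2 := by
  refine ⟨fun h ↦ columnTail m f h - columnTail m f (h + 1),
    fun h hh ↦ sub_nonneg.2 (columnTail_succ_le hf hh), fun z hz ↦ ?_, ?_⟩
  · obtain ⟨hz1, hzm⟩ := mem_Icc.1 hz
    simp_rw [mul_ite, mul_zero]
    rw [sum_Icc_one_ite_le _ hz1, ← sum_mul, sum_Icc_sub_succ _ (by omega),
      columnTail_of_lt m.lt_succ_self, sub_zero, mul_comm, div_mul_columnTail hz]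
  · rw [sum_Icc_sub_succ _ (by omega), columnTail_of_lt m.lt_succ_self, sub_zero]
    exact columnTail_one_le hf

end ColumnTail

theorem vcg_bit_column_pseudo_complexity_general (m : ℕ) (β : ℕ) :
    ∃ w : ℕ → ℝ,
      (∀ h ∈ Finset.Icc 1 m, 0 ≤ w h) ∧
      (∀ z ∈ Finset.Icc 1 m, ∀ z' ∈ Finset.Icc 1 m,
        ((z / 2^β % 2 : ℕ) : ℝ) - ((z' / 2^β % 2 : ℕ) : ℝ) =
          ∑ h ∈ Finset.Icc 1 m, w h *
            ((if z ≤ h then (z : ℝ) / m else 0) - (if z' ≤ h then (z' : ℝ) / m else 0))) ∧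
      (∑ h ∈ Finset.Icc 1 m, w h ≤ 2 * (m : ℝ) * ((m : ℝ) - 1) + m) := by
  have hbit : ∀ z ∈ Icc 1 m, ((z / 2 ^ β % 2 : ℕ) : ℝ) ∈ Set.Icc (0 : ℝ) 1 := fun z _ ↦
    ⟨Nat.cast_nonneg _, by exact_mod_cast Nat.le_of_lt_succ (Nat.mod_lt _ two_pos)⟩
  obtain ⟨w, hw0, hw, hsum⟩ := exists_nonneg_weights_threshold_sum_eq hbit
  refine ⟨w, hw0, fun z hz z' hz' ↦ ?_, ?_⟩
  · simp_rw [mul_sub, sum_sub_distrib, hw z hz, hw z' hz']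
    ring
  · have hm : (m : ℝ) ≤ (m : ℝ) ^ 2 := by exact_mod_cast Nat.le_self_pow two_ne_zero m
    linarith

/-- **Pseudo-complexity of the binary-encoding implementation.**
For every `m ≥ 1` and bit position `β`, there exist nonnegative weights `w 1, …, w m`
implementing the β-th binary digit column, i.e.
`bit_β(z) − bit_β(z') = Σ_{h=1}^m w_h ((z/m)·1[h ≥ z] − (z'/m)·1[h ≥ z'])`
for all `z, z' ∈ {1,…,m}`, with total weight `Σ_h w_h ≤ 2m(m−1) + m`. -/
theorem vcg_bit_column_pseudo_complexity (m : ℕ) (hm : 1 ≤ m) (β : ℕ) :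
    ∃ w : ℕ → ℝ,
      (∀ h ∈ Finset.Icc 1 m, 0 ≤ w h) ∧
      (∀ z ∈ Finset.Icc 1 m, ∀ z' ∈ Finset.Icc 1 m,
        ((z / 2^β % 2 : ℕ) : ℝ) - ((z' / 2^β % 2 : ℕ) : ℝ) =
          ∑ h ∈ Finset.Icc 1 m, w h *
            ((if z ≤ h then (z : ℝ) / m else 0) - (if z' ≤ h then (z' : ℝ) / m else 0))) ∧
      (∑ h ∈ Finset.Icc 1 m, w h ≤ 2 * (m : ℝ) * ((m : ℝ) - 1) + m) :=
  vcg_bit_column_pseudo_complexity_general m β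
end

section
/- (Contextual Admissibility) If Γ is (κ,δ)-admissible and Q is a finite separator for the finite policy class Π, then the contextual Q-extension Γ^Q is (κ,δ)-admissible: its rows (indexed by Π) are pairwise distinct, each of its columns contains at most κ distinct values, and any two distinct values appearing in the same column differ by at least δ. -/
open Finset

/-- A matrix `M : A → J → ℝ` is `(κ,δ)`-admissible: all rows are distinct, each column
contains at most `κ` distinct values, and any two distinct values appearing in the same
column differ by at least `δ`. -/
def Admissible {A J : Type*} [Fintype A] [Fintype J]
    (κ : ℕ) (δ : ℝ) (M : A → J → ℝ) : Prop :=
  (∀ a a' : A, a ≠ a' → ∃ j : J, M a j ≠ M a' j) ∧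
  (∀ j : J, (Finset.univ.image fun a => M a j).card ≤ κ) ∧
  (∀ (j : J) (a a' : A), M a j ≠ M a' j → δ ≤ |M a j - M a' j|)

/-- **Contextual Admissibility.**
If `Γ` is `(κ,δ)`-admissible and `Q` is a finite separator for the finite policy class
`Pol`, then the contextual `Q`-extension `Γ^Q`, with rows indexed by policies and
columns indexed by `Q × {1,…,N}` and entries `Γ^Q_{π,(σ,j)} = Γ_{π(σ),j}`, is also
`(κ,δ)`-admissible. -/
theorem contextual_admissibility
    {X C : Type*} [Fintype X]
    (N : ℕ) (hN : 1 ≤ N)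
    (Γ : X → Fin N → ℝ) (hΓ : ∀ x j, Γ x j ∈ Set.Icc (0:ℝ) 1)
    (κ : ℕ) (δ : ℝ)
    (hadm : Admissible κ δ Γ)
    (Pol : Finset (C → X)) (Q : Finset C)
    (hsep : ∀ π ∈ Pol, ∀ π' ∈ Pol, π ≠ π' → ∃ σ ∈ Q, π σ ≠ π' σ) :
    Admissible κ δ (fun (π : ↥Pol) (c : ↥Q × Fin N) => Γ (π.1 c.1.1) c.2) := by
  obtain ⟨h1, h2, h3⟩ := hadm
  refine ⟨?_, ?_, ?_⟩
  · rintro ⟨π, hπ⟩ ⟨π', hπ'⟩ hne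
    have hne' : π ≠ π' := by simpa using hne
    obtain ⟨σ, hσ, hx⟩ := hsep π hπ π' hπ' hne'
    obtain ⟨j, hj⟩ := h1 (π σ) (π' σ) hx
    exact ⟨(⟨σ, hσ⟩, j), hj⟩
  · rintro ⟨⟨σ, hσ⟩, j⟩
    calc (Finset.univ.image fun π : ↥Pol => Γ (π.1 σ) j).card
        ≤ (Finset.univ.image fun x : X => Γ x j).card := by
          apply Finset.card_le_card
          intro v hv
          simp only [Finset.mem_image, Finset.mem_univ, true_and] at hv ⊢
          obtain ⟨π, hπ⟩ := hv
          exact ⟨π.1 σ, hπ⟩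
      _ ≤ κ := h2 j
  · rintro ⟨⟨σ, hσ⟩, j⟩ π π' hne
    exact h3 j (π.1 σ) (π'.1 σ) hne
end

section
/- (Transductive contextual stability) Suppose Γ is (κ,δ)-admissible, let ε ≥ 0, let D be a (ρ, (1+2ε)/δ)-dispersed probability distribution on ℝ, let α = (α_{σ,j})_{σ∈P, 1≤j≤N} have independent coordinates each with law D, and suppose that for every α the sequence π_1(α),…,π_{T+1}(α) is an ε-approximate contextual FTPL trajectory for α, with each map α ↦ π_t(α) measurable. Then E[ Σ_{t=1}^T ( f(π_{t+1}(α)(σ_t), y_t) − f(π_t(α)(σ_t), y_t) ) ] ≤ 2TNκρ. -/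
/-!
Fix a round `t` and a column `j`, and freeze every perturbation coordinate except
`z = α (σ t, j)`. As functions of `z`, the objectives of rounds `t` and `t + 1` are affine with
slope `Γ (π (σ t)) j` and differ only by the payoff of round `t`, which lies in `[0, 1]`. Grouping
policies by slope, the slopes chosen at rounds `t` and `t + 1` can differ only on at most `2κ`
sets of diameter at most `(1 + 2ε)/δ`, each of `D`-mass at most `ρ`. By Fubini this bounds the
probability that column `j` switches at round `t` by `2κρ`; since the rows of `Γ` are distinct,
a change of the round-`t` payoff forces a switch in one of the `N` columns.
-/

open Finset MeasureTheory
open scoped ENNReal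

def IsApproxMaxOn {α : Type*} (F : α → ℝ) (s : Set α) (ε : ℝ) (a : α) : Prop :=
  ∀ b ∈ s, F b - ε ≤ F a

theorem IsApproxMaxOn.of_le_of_le_add {α : Type*} {F G : α → ℝ} {s : Set α} {ε c : ℝ} {a : α}
    (h : IsApproxMaxOn F s ε a) (hGF : ∀ b ∈ s, G b ≤ F b) (hFG : F a ≤ G a + c) :
    IsApproxMaxOn G s (ε + c) a := fun b hb => by
  linarith [h b hb, hGF b hb]

/-- Off `g '' s` this is the junk value `sSup ∅ = 0`. -/
noncomputable def fiberMax {α : Type*} (K g : α → ℝ) (s : Finset α) (v : ℝ) : ℝ :=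
  sSup ↑((s.filter fun a => g a = v).image K)

section fiberMax

variable {α : Type*} {K g : α → ℝ} {s : Finset α} {a : α}

theorem le_fiberMax (K g : α → ℝ) (ha : a ∈ s) : K a ≤ fiberMax K g s (g a) :=
  le_csSup (Finset.bddAbove _) (mem_image_of_mem K (mem_filter.2 ⟨ha, rfl⟩))

theorem exists_eq_fiberMax (K g : α → ℝ) (ha : a ∈ s) :
    ∃ b ∈ s, g b = g a ∧ K b = fiberMax K g s (g a) := by
  have hne : ((s.filter fun b => g b = g a).image K).Nonempty :=
    ⟨K a, mem_image_of_mem K (mem_filter.2 ⟨ha, rfl⟩)⟩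
  obtain ⟨b, hb, hKb⟩ := mem_image.1 hne.csSup_mem
  exact ⟨b, (mem_filter.1 hb).1, (mem_filter.1 hb).2, hKb⟩

/-- Replacing `K` by its maximum over each fibre of `g` reduces approximate maximization over `s`
to approximate maximization over the finite set of slopes `g '' s`. -/
theorem IsApproxMaxOn.fiberMax {z ε : ℝ} (h : IsApproxMaxOn (fun b => K b + z * g b) s ε a)
    (ha : a ∈ s) : IsApproxMaxOn (fun v => fiberMax K g s v + z * v) (s.image g) ε (g a) := by
  intro v hv
  obtain ⟨b, hb, rfl⟩ := mem_image.1 hv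
  obtain ⟨b', hb', hgb', hKb'⟩ := exists_eq_fiberMax K g hb
  have := h b' hb'
  have := le_fiberMax K g ha
  simp only
  rw [← hKb', ← hgb']
  linarith

end fiberMax

theorem measure_le_of_forall_sub_le {D : Measure ℝ} {A : Set ℝ} {L : ℝ} {r : ℝ≥0∞}
    (hdisp : ∀ a, D (Set.Icc a (a + L)) ≤ r)
    (hA : ∀ z ∈ A, ∀ z' ∈ A, z ≤ z' → z' - z ≤ L) : D A ≤ r := by
  rcases A.eq_empty_or_nonempty with rfl | ⟨z₀, hz₀⟩
  · simp
  have hA' : ∀ z ∈ A, ∀ z' ∈ A, z' - z ≤ L := fun z hz z' hz' =>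
    (le_total z z').elim (hA z hz z' hz') fun h => by linarith [hA z' hz' z' hz' le_rfl]
  have hbdd : BddBelow A := ⟨z₀ - L, fun z hz => by linarith [hA' z hz z₀ hz₀]⟩
  refine (measure_mono (t := Set.Icc (sInf A) (sInf A + L)) fun z hz =>
    ⟨csInf_le hbdd hz, ?_⟩).trans (hdisp (sInf A))
  have : z - L ≤ sInf A := le_csInf ⟨z₀, hz₀⟩ fun z' hz' => by linarith [hA' z' hz' z hz]
  linarith

theorem measure_setOf_ne_le_of_isApproxMaxOn {D : Measure ℝ} {V : Finset ℝ} {B p q : ℝ → ℝ}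
    {δ ε₁ ε₂ L : ℝ} {r : ℝ≥0∞} (hδ : 0 < δ) (hV : (V : Set ℝ).Pairwise fun u w => δ ≤ |u - w|)
    (hL : ε₁ + ε₂ ≤ L * δ) (hdisp : ∀ a, D (Set.Icc a (a + L)) ≤ r)
    (hpV : ∀ z, p z ∈ V) (hqV : ∀ z, q z ∈ V)
    (hp : ∀ z, IsApproxMaxOn (fun v => B v + z * v) V ε₁ (p z))
    (hq : ∀ z, IsApproxMaxOn (fun v => B v + z * v) V ε₂ (q z)) :
    D {z | p z ≠ q z} ≤ 2 * #V * r := by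
  have hsep : ∀ z, p z < q z → δ ≤ q z - p z := fun z h => by
    simpa [abs_of_neg (sub_neg.2 h)] using hV (hpV z) (hqV z) h.ne
  have hsep' : ∀ z, q z < p z → δ ≤ p z - q z := fun z h => by
    simpa [abs_of_pos (sub_pos.2 h)] using hV (hpV z) (hqV z) h.ne'
  -- On each piece, adding the optimality of `p` at one of two points `z ≤ z'` to that of `q` at
  -- the other gives `(z' - z) * δ ≤ ε₁ + ε₂`.
  have hup : ∀ u, ∀ z ∈ {z | p z = u ∧ u < q z}, ∀ z' ∈ {z | p z = u ∧ u < q z},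
      z ≤ z' → z' - z ≤ L := by
    rintro u z ⟨rfl, hlt⟩ z' ⟨hz', -⟩ hzz'
    have h₁ := hq z (p z) (hpV z)
    have h₂ := hp z' (q z) (hqV z)
    rw [hz'] at h₂
    refine le_of_mul_le_mul_right ?_ hδ
    linarith [mul_le_mul_of_nonneg_left (hsep z hlt) (sub_nonneg.2 hzz')]
  have hdown : ∀ u, ∀ z ∈ {z | p z = u ∧ q z < u}, ∀ z' ∈ {z | p z = u ∧ q z < u},
      z ≤ z' → z' - z ≤ L := by
    rintro u z ⟨rfl, -⟩ z' ⟨hz', hlt⟩ hzz'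
    have h₁ := hq z' (p z) (hpV z)
    have h₂ := hp z (q z') (hqV z')
    have hgap := hsep' z' (by rwa [hz'])
    rw [hz'] at hgap
    refine le_of_mul_le_mul_right ?_ hδ
    linarith [mul_le_mul_of_nonneg_left hgap (sub_nonneg.2 hzz')]
  calc D {z | p z ≠ q z}
      ≤ D (⋃ u ∈ V, ({z | p z = u ∧ u < q z} ∪ {z | p z = u ∧ q z < u})) :=
        measure_mono fun z hz => Set.mem_biUnion (hpV z) <|
          (lt_or_gt_of_ne hz).imp (fun h => ⟨rfl, h⟩) fun h => ⟨rfl, h⟩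
    _ ≤ ∑ u ∈ V, D ({z | p z = u ∧ u < q z} ∪ {z | p z = u ∧ q z < u}) :=
        measure_biUnion_finset_le _ _
    _ ≤ ∑ _u ∈ V, 2 * r := sum_le_sum fun u _ => (measure_union_le _ _).trans <| by
        rw [two_mul]
        exact add_le_add (measure_le_of_forall_sub_le hdisp (hup u))
          (measure_le_of_forall_sub_le hdisp (hdown u))
    _ = 2 * #V * r := by rw [sum_const, nsmul_eq_mul]; ring

theorem nonneg_of_forall_measure_Icc_le_ofReal {D : Measure ℝ} [NeZero D] {L ρ : ℝ} (hL : 0 < L)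
    (hdisp : ∀ a, D (Set.Icc a (a + L)) ≤ ENNReal.ofReal ρ) : 0 ≤ ρ := by
  by_contra! hρ
  have hnull : ∀ n : ℤ, D (Set.Icc (0 + n • L) (0 + (n + 1) • L)) = 0 := fun n =>
    nonpos_iff_eq_zero.1 <| by
      simpa [ENNReal.ofReal_eq_zero.2 hρ.le, add_smul, add_comm] using hdisp (n • L)
  apply NeZero.ne D
  rw [← Measure.measure_univ_eq_zero, ← iUnion_Icc_add_zsmul hL 0]
  exact measure_iUnion_null hnull

theorem measurable_comp_of_measurableSet_fiber {Ω β γ : Type*} [MeasurableSpace Ω]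
    [MeasurableSpace γ] [Countable β] {F : Ω → β} (hF : ∀ b, MeasurableSet {ω | F ω = b})
    (g : β → γ) : Measurable fun ω => g (F ω) := by
  intro S _
  have : (fun ω => g (F ω)) ⁻¹' S = ⋃ b ∈ g ⁻¹' S, {ω | F ω = b} := by ext; simp
  rw [this]
  exact .biUnion (Set.to_countable _) fun b _ => hF b

theorem MeasureTheory.Measure.pi_le_of_forall_update_le {ι : Type*} [Fintype ι] [DecidableEq ι]
    {α : ι → Type*} [∀ i, MeasurableSpace (α i)] {μ : ∀ i, Measure (α i)}
    [∀ i, IsProbabilityMeasure (μ i)] {E : Set (∀ i, α i)} (hE : MeasurableSet E) (i : ι)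
    {r : ℝ≥0∞} (h : ∀ x, μ i {z | Function.update x i z ∈ E} ≤ r) :
    Measure.pi μ E ≤ r := by
  have := fun i => nonempty_of_isProbabilityMeasure (μ i)
  have hmeas : Measurable (E.indicator (1 : (∀ i, α i) → ℝ≥0∞)) := measurable_one.indicator hE
  rw [← lintegral_indicator_one hE, lintegral_eq_lmarginal_univ (Classical.arbitrary _),
    lmarginal_erase' _ hmeas (mem_univ i)]
  calc _ ≤ (∫⋯∫⁻_(univ.erase i), (fun _ => r) ∂μ) (Classical.arbitrary _) := by
        refine lmarginal_mono (fun x => ?_) _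
        refine le_of_eq_of_le ?_ (h x)
        exact lintegral_indicator_one (measurable_update x hE)
    _ = r := by simp [lmarginal]

theorem integral_sum_sub_le_sum_measureReal_ne {Ω ι : Type*} [MeasurableSpace Ω]
    {μ : Measure Ω} [IsFiniteMeasure μ] (s : Finset ι) {u v : ι → Ω → ℝ}
    (hu : ∀ i, Measurable (u i)) (hv : ∀ i, Measurable (v i))
    (hu01 : ∀ i ω, u i ω ∈ Set.Icc 0 1) (hv01 : ∀ i ω, v i ω ∈ Set.Icc 0 1) :
    ∫ ω, ∑ i ∈ s, (u i ω - v i ω) ∂μ ≤ ∑ i ∈ s, μ.real {ω | u i ω ≠ v i ω} := by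
  have hint : ∀ i, Integrable (u i) μ ∧ Integrable (v i) μ := fun i =>
    ⟨.of_mem_Icc 0 1 (hu i).aemeasurable (ae_of_all _ (hu01 i)),
      .of_mem_Icc 0 1 (hv i).aemeasurable (ae_of_all _ (hv01 i))⟩
  rw [integral_finsetSum (f := fun i ω => u i ω - v i ω) s fun i _ => (hint i).1.sub (hint i).2]
  refine sum_le_sum fun i _ => ?_
  have hne : MeasurableSet {ω | u i ω ≠ v i ω} := (measurableSet_eq_fun (hu i) (hv i)).compl
  rw [← integral_indicator_one hne]
  refine integral_mono ((hint i).1.sub (hint i).2) ((integrable_const 1).indicator hne) fun ω => ?_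
  by_cases h : u i ω = v i ω
  · simp [h]
  · simp only [Set.indicator_of_mem (show ω ∈ {ω | u i ω ≠ v i ω} from h), Pi.one_apply]
    linarith [(hu01 i ω).2, (hv01 i ω).1]

section Contextual

variable {X Y P : Type*} {N : ℕ}

def cumulativePayoff (f : X → Y → ℝ) (σ : ℕ → P) (y : ℕ → Y) (n : ℕ) (π : P → X) : ℝ :=
  ∑ τ ∈ Icc 1 n, f (π (σ τ)) (y τ)

def perturbationPayoff [Fintype P] (Γ : X → Fin N → ℝ) (α : P × Fin N → ℝ) (π : P → X) : ℝ :=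
  ∑ c, α c * Γ (π c.1) c.2

theorem cumulativePayoff_succ (f : X → Y → ℝ) (σ : ℕ → P) (y : ℕ → Y) (n : ℕ) (π : P → X) :
    cumulativePayoff f σ y (n + 1) π =
      cumulativePayoff f σ y n π + f (π (σ (n + 1))) (y (n + 1)) :=
  sum_Icc_succ_top (by omega) _

theorem perturbationPayoff_update [Fintype P] [DecidableEq P] (Γ : X → Fin N → ℝ)
    (β : P × Fin N → ℝ) (c : P × Fin N) (z : ℝ) (π : P → X) :
    perturbationPayoff Γ (Function.update β c z) π =
      perturbationPayoff Γ (Function.update β c 0) π + z * Γ (π c.1) c.2 := by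
  simp only [perturbationPayoff, ← add_sum_erase _ _ (mem_univ c), Function.update_self]
  rw [zero_mul, zero_add, add_comm]
  congr 1
  refine sum_congr rfl fun c' hc' => ?_
  simp only [Function.update_of_ne (ne_of_mem_erase hc')]

variable {f : X → Y → ℝ} {σ : ℕ → P} {y : ℕ → Y} {Γ : X → Fin N → ℝ} {Pol : Finset (P → X)}
  {Pf Qf : (P × Fin N → ℝ) → P → X} {n κ : ℕ} {ε δ L : ℝ} {r : ℝ≥0∞}

theorem measure_slice_ne_le [Fintype X] [Fintype P] [DecidableEq P] {D : Measure ℝ}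
    (hf : ∀ x y, f x y ∈ Set.Icc 0 1)
    (hcol : ∀ j : Fin N, #(univ.image fun x => Γ x j) ≤ κ)
    (hgap : ∀ j x x', Γ x j ≠ Γ x' j → δ ≤ |Γ x j - Γ x' j|) (hδ : 0 < δ)
    (hL : 1 + 2 * ε ≤ L * δ) (hdisp : ∀ a, D (Set.Icc a (a + L)) ≤ r)
    (hPmem : ∀ α, Pf α ∈ Pol) (hQmem : ∀ α, Qf α ∈ Pol)
    (hP : ∀ α, IsApproxMaxOn (fun π => cumulativePayoff f σ y n π + perturbationPayoff Γ α π)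
      Pol ε (Pf α))
    (hQ : ∀ α, IsApproxMaxOn (fun π => cumulativePayoff f σ y (n + 1) π + perturbationPayoff Γ α π)
      Pol ε (Qf α))
    (j : Fin N) (β : P × Fin N → ℝ) :
    D {z | Γ (Pf (Function.update β (σ (n + 1), j) z) (σ (n + 1))) j ≠
      Γ (Qf (Function.update β (σ (n + 1), j) z) (σ (n + 1))) j} ≤ 2 * κ * r := by
  set α : ℝ → P × Fin N → ℝ := fun z => Function.update β (σ (n + 1), j) z
  set g : (P → X) → ℝ := fun π => Γ (π (σ (n + 1))) j
  set K : (P → X) → ℝ := fun π =>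
    cumulativePayoff f σ y n π + perturbationPayoff Γ (Function.update β (σ (n + 1), j) 0) π
  have hsplit : ∀ z π, cumulativePayoff f σ y n π + perturbationPayoff Γ (α z) π =
      K π + z * g π := fun z π => by
    rw [perturbationPayoff_update Γ β _ z]; ring
  have hP' : ∀ z, IsApproxMaxOn (fun π => K π + z * g π) Pol ε (Pf (α z)) := fun z => by
    simpa only [hsplit] using hP (α z)
  -- The round-`(n + 1)` payoff in `[0, 1]` costs one unit of approximation.
  have hQ' : ∀ z, IsApproxMaxOn (fun π => K π + z * g π) Pol (ε + 1) (Qf (α z)) := fun z => by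
    refine (hQ (α z)).of_le_of_le_add (fun π _ => ?_) ?_ <;>
      simp only [cumulativePayoff_succ, add_right_comm _ (f _ _), hsplit]
    · linarith [(hf (π (σ (n + 1))) (y (n + 1))).1]
    · linarith [(hf (Qf (α z) (σ (n + 1))) (y (n + 1))).2]
  have hV : (↑(Pol.image g) : Set ℝ).Pairwise fun u w => δ ≤ |u - w| := by
    intro u hu w hw huw
    obtain ⟨π, -, rfl⟩ := mem_image.1 hu
    obtain ⟨π', -, rfl⟩ := mem_image.1 hw
    exact hgap j _ _ huw
  have hcard : #(Pol.image g) ≤ κ :=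
    (card_le_card fun u hu => by
      obtain ⟨π, -, rfl⟩ := mem_image.1 hu
      exact mem_image_of_mem _ (mem_univ _)).trans (hcol j)
  calc _ ≤ 2 * #(Pol.image g) * r :=
        measure_setOf_ne_le_of_isApproxMaxOn hδ hV (by linarith) hdisp
          (fun z => mem_image_of_mem g (hPmem _)) (fun z => mem_image_of_mem g (hQmem _))
          (fun z => (hP' z).fiberMax (hPmem _)) (fun z => (hQ' z).fiberMax (hQmem _))
    _ ≤ 2 * κ * r := by gcongr

theorem measure_payoff_ne_le [Fintype X] [Fintype P] [DecidableEq P] {D : Measure ℝ}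
    [IsProbabilityMeasure D] (hf : ∀ x y, f x y ∈ Set.Icc 0 1)
    (hrows : ∀ x x' : X, x ≠ x' → ∃ j, Γ x j ≠ Γ x' j)
    (hcol : ∀ j : Fin N, #(univ.image fun x => Γ x j) ≤ κ)
    (hgap : ∀ j x x', Γ x j ≠ Γ x' j → δ ≤ |Γ x j - Γ x' j|) (hδ : 0 < δ)
    (hL : 1 + 2 * ε ≤ L * δ) (hdisp : ∀ a, D (Set.Icc a (a + L)) ≤ r)
    (hPmem : ∀ α, Pf α ∈ Pol) (hQmem : ∀ α, Qf α ∈ Pol)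
    (hPmeas : ∀ π₀, MeasurableSet {α | Pf α = π₀}) (hQmeas : ∀ π₀, MeasurableSet {α | Qf α = π₀})
    (hP : ∀ α, IsApproxMaxOn (fun π => cumulativePayoff f σ y n π + perturbationPayoff Γ α π)
      Pol ε (Pf α))
    (hQ : ∀ α, IsApproxMaxOn (fun π => cumulativePayoff f σ y (n + 1) π + perturbationPayoff Γ α π)
      Pol ε (Qf α)) :
    Measure.pi (fun _ : P × Fin N => D)
        {α | f (Qf α (σ (n + 1))) (y (n + 1)) ≠ f (Pf α (σ (n + 1))) (y (n + 1))} ≤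
      N * (2 * κ * r) := by
  have hsub : {α | f (Qf α (σ (n + 1))) (y (n + 1)) ≠ f (Pf α (σ (n + 1))) (y (n + 1))} ⊆
      ⋃ j, {α | Γ (Pf α (σ (n + 1))) j ≠ Γ (Qf α (σ (n + 1))) j} := fun α hα => by
    obtain ⟨j, hj⟩ := hrows (Pf α (σ (n + 1))) (Qf α (σ (n + 1))) fun h => hα (by rw [h])
    exact Set.mem_iUnion.2 ⟨j, hj⟩
  have hmeas : ∀ j, MeasurableSet {α | Γ (Pf α (σ (n + 1))) j ≠ Γ (Qf α (σ (n + 1))) j} :=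
    fun j => (measurableSet_eq_fun
      (measurable_comp_of_measurableSet_fiber hPmeas fun π => Γ (π (σ (n + 1))) j)
      (measurable_comp_of_measurableSet_fiber hQmeas fun π => Γ (π (σ (n + 1))) j)).compl
  calc _ ≤ ∑ j, Measure.pi (fun _ : P × Fin N => D)
          {α | Γ (Pf α (σ (n + 1))) j ≠ Γ (Qf α (σ (n + 1))) j} :=
        (measure_mono hsub).trans (measure_iUnion_fintype_le _ _)
    _ ≤ ∑ _j : Fin N, 2 * κ * r := sum_le_sum fun j _ =>
        Measure.pi_le_of_forall_update_le (hmeas j) (σ (n + 1), j)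
          (measure_slice_ne_le hf hcol hgap hδ hL hdisp hPmem hQmem hP hQ j)
    _ = N * (2 * κ * r) := by simp

end Contextual

theorem transductive_contextual_stability_general
    {X Y P : Type*} [Fintype X] [Fintype P]
    (f : X → Y → ℝ) (hf : ∀ x y, f x y ∈ Set.Icc (0:ℝ) 1)
    (T : ℕ) (σ : ℕ → P) (y : ℕ → Y)
    (N : ℕ)
    (Γ : X → Fin N → ℝ)
    (Pol : Finset (P → X))
    (κ : ℕ) (δ : ℝ) (hδ : 0 < δ)
    -- (κ,δ)-admissibility of Γ:
    (hrows : ∀ x x' : X, x ≠ x' → ∃ j, Γ x j ≠ Γ x' j)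
    (hcol : ∀ j : Fin N, (Finset.univ.image fun x => Γ x j).card ≤ κ)
    (hgap : ∀ (j : Fin N) (x x' : X), Γ x j ≠ Γ x' j → δ ≤ |Γ x j - Γ x' j|)
    (ε ρ : ℝ) (hε : 0 ≤ ε)
    (D : Measure ℝ) [IsProbabilityMeasure D]
    (hdisp : ∀ a : ℝ, D (Set.Icc a (a + (1 + 2*ε)/δ)) ≤ ENNReal.ofReal ρ)
    (πtraj : (P × Fin N → ℝ) → ℕ → (P → X))
    (hmem : ∀ (α : P × Fin N → ℝ) (t : ℕ), πtraj α t ∈ Pol)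
    (hmeas : ∀ (t : ℕ) (π₀ : P → X), MeasurableSet {α : P × Fin N → ℝ | πtraj α t = π₀})
    (htraj : ∀ (α : P × Fin N → ℝ) (t : ℕ), 1 ≤ t → t ≤ T + 1 → ∀ π ∈ Pol,
      (∑ τ ∈ Finset.Icc 1 (t-1), f (πtraj α t (σ τ)) (y τ)) +
        (∑ c : P × Fin N, α c * Γ (πtraj α t c.1) c.2) ≥
      (∑ τ ∈ Finset.Icc 1 (t-1), f (π (σ τ)) (y τ)) +
        (∑ c : P × Fin N, α c * Γ (π c.1) c.2) - ε) :
    ∫ α, (∑ t ∈ Finset.Icc 1 T,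
          (f (πtraj α (t+1) (σ t)) (y t) - f (πtraj α t (σ t)) (y t)))
        ∂(Measure.pi fun _ : P × Fin N => D) ≤ 2 * T * N * κ * ρ := by
  classical
  have hρ : 0 ≤ ρ := nonneg_of_forall_measure_Icc_le_ofReal (by positivity) hdisp
  have hL : 1 + 2 * ε ≤ (1 + 2 * ε) / δ * δ := (div_mul_cancel₀ _ hδ.ne').ge
  have hround : ∀ t ∈ Icc 1 T, (Measure.pi fun _ : P × Fin N => D).real
      {α | f (πtraj α (t + 1) (σ t)) (y t) ≠ f (πtraj α t (σ t)) (y t)} ≤ N * (2 * κ * ρ) := by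
    intro t ht
    obtain ⟨ht1, htT⟩ := mem_Icc.1 ht
    obtain ⟨n, rfl⟩ : ∃ n, t = n + 1 := ⟨t - 1, by omega⟩
    refine ENNReal.toReal_le_of_le_ofReal (by positivity) <|
      (measure_payoff_ne_le hf hrows hcol hgap hδ hL hdisp (hmem · _) (hmem · _) (hmeas _)
        (hmeas _) (fun α => htraj α (n + 1) (by omega) (by omega))
        (fun α => htraj α (n + 2) (by omega) (by omega))).trans_eq ?_
    rw [ENNReal.ofReal_mul (by positivity), ENNReal.ofReal_mul (by positivity)]
    simp
  calc _ ≤ ∑ t ∈ Icc 1 T, (Measure.pi fun _ : P × Fin N => D).real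
          {α | f (πtraj α (t + 1) (σ t)) (y t) ≠ f (πtraj α t (σ t)) (y t)} :=
        integral_sum_sub_le_sum_measureReal_ne _ (u := fun t α => f (πtraj α (t + 1) (σ t)) (y t))
          (v := fun t α => f (πtraj α t (σ t)) (y t))
          (fun t => measurable_comp_of_measurableSet_fiber (hmeas _) fun π => f (π (σ t)) (y t))
          (fun t => measurable_comp_of_measurableSet_fiber (hmeas _) fun π => f (π (σ t)) (y t))
          (fun _ _ => hf _ _) (fun _ _ => hf _ _)
    _ ≤ ∑ _t ∈ Icc 1 T, N * (2 * κ * ρ) := sum_le_sum hround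
    _ = 2 * T * N * κ * ρ := by
        rw [sum_const, Nat.card_Icc, nsmul_eq_mul]
        push_cast
        ring

/-- **Transductive contextual stability.**
In the transductive contextual setting with finite context set `P`, if `Γ` is
`(κ,δ)`-admissible, the coordinates `α_{σ,j}` are i.i.d. with a
`(ρ, (1+2ε)/δ)`-dispersed law `D`, and `πtraj α` is an ε-approximate contextual FTPL
trajectory (for the extension `Γ^P`) for every `α`, then
`E[ Σ_{t=1}^T ( f(π_{t+1}(α)(σ_t), y_t) − f(π_t(α)(σ_t), y_t) ) ] ≤ 2TNκρ`. -/
theorem transductive_contextual_stability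
    {X Y P : Type*} [Fintype X] [Nonempty X] [Fintype P]
    (f : X → Y → ℝ) (hf : ∀ x y, f x y ∈ Set.Icc (0:ℝ) 1)
    (T : ℕ) (hT : 1 ≤ T) (σ : ℕ → P) (y : ℕ → Y)
    (N : ℕ) (hN : 1 ≤ N)
    (Γ : X → Fin N → ℝ) (hΓ : ∀ x j, Γ x j ∈ Set.Icc (0:ℝ) 1)
    (Pol : Finset (P → X)) (hPol : Pol.Nonempty)
    (κ : ℕ) (δ : ℝ) (hδ : 0 < δ)
    -- (κ,δ)-admissibility of Γ:
    (hrows : ∀ x x' : X, x ≠ x' → ∃ j, Γ x j ≠ Γ x' j)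
    (hcol : ∀ j : Fin N, (Finset.univ.image fun x => Γ x j).card ≤ κ)
    (hgap : ∀ (j : Fin N) (x x' : X), Γ x j ≠ Γ x' j → δ ≤ |Γ x j - Γ x' j|)
    (ε ρ : ℝ) (hε : 0 ≤ ε)
    (D : Measure ℝ) [IsProbabilityMeasure D]
    (hdisp : ∀ a : ℝ, D (Set.Icc a (a + (1 + 2*ε)/δ)) ≤ ENNReal.ofReal ρ)
    (πtraj : (P × Fin N → ℝ) → ℕ → (P → X))
    (hmem : ∀ (α : P × Fin N → ℝ) (t : ℕ), πtraj α t ∈ Pol)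
    (hmeas : ∀ (t : ℕ) (π₀ : P → X), MeasurableSet {α : P × Fin N → ℝ | πtraj α t = π₀})
    (htraj : ∀ (α : P × Fin N → ℝ) (t : ℕ), 1 ≤ t → t ≤ T + 1 → ∀ π ∈ Pol,
      (∑ τ ∈ Finset.Icc 1 (t-1), f (πtraj α t (σ τ)) (y τ)) +
        (∑ c : P × Fin N, α c * Γ (πtraj α t c.1) c.2) ≥
      (∑ τ ∈ Finset.Icc 1 (t-1), f (π (σ τ)) (y τ)) +
        (∑ c : P × Fin N, α c * Γ (π c.1) c.2) - ε) :
    ∫ α, (∑ t ∈ Finset.Icc 1 T,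
          (f (πtraj α (t+1) (σ t)) (y t) - f (πtraj α t (σ t)) (y t)))
        ∂(Measure.pi fun _ : P × Fin N => D) ≤ 2 * T * N * κ * ρ :=
  transductive_contextual_stability_general f hf T σ y N Γ Pol κ δ hδ hrows hcol hgap ε ρ hε D hdisp
    πtraj hmem hmeas htraj
end

section
/- (Implementability of the bid-vector translation matrix for SiSPAs) Let k ≥ 1, m ≥ 1, and let v : {0,1}^k → [0,1] be a valuation with v(0) = 0. Fix j ∈ {1,…,k}, and for ℓ = 0,…,m−1 define the threshold vector p^j_ℓ = (ℓ/m)·e_j + Σ_{j'≠j} e_{j'} ∈ [0,1]^k and the weight w_ℓ = (1/m)/(v(e_j) − ℓ/m) if ℓ/m < v(e_j) and w_ℓ = 0 otherwise. Then for every bid vector b ∈ [0,1]^k whose entries are integer multiples of 1/m and which satisfies the no-overbidding condition b·q ≤ v(q) for all q ∈ {0,1}^k, one has Σ_{ℓ=0}^{m−1} w_ℓ·u(b, p^j_ℓ) = b_j. -/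
open Finset

/-- **Implementability of the bid-vector translation matrix for SiSPAs.**
In a simultaneous second-price auction with `k` items, valuation `v` over bundles
(with `v ∅ = 0`), allocation `q(b,p) = {j' | b_{j'} > p_{j'}}` and utility
`u(b,p) = v(q(b,p)) − Σ_{j'∈q(b,p)} p_{j'}`: for the threshold vectors
`p^j_ℓ = (ℓ/m)e_j + Σ_{j'≠j} e_{j'}` and weights
`w_ℓ = (1/m)/(v({j}) − ℓ/m)` when `ℓ/m < v({j})` (else `0`), every discretized
no-overbidding bid vector `b` satisfies `Σ_{ℓ=0}^{m−1} w_ℓ · u(b, p^j_ℓ) = b_j`. -/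
theorem sispa_translation_matrix_implementable
    (k : ℕ) (hk : 1 ≤ k) (m : ℕ) (hm : 1 ≤ m)
    (v : Finset (Fin k) → ℝ)
    (hv : ∀ q, v q ∈ Set.Icc (0:ℝ) 1) (hv0 : v ∅ = 0)
    (u : (Fin k → ℝ) → (Fin k → ℝ) → ℝ)
    (hu : ∀ b p : Fin k → ℝ,
      u b p = v (Finset.univ.filter fun j' => p j' < b j') -
        ∑ j' ∈ Finset.univ.filter fun j' => p j' < b j', p j')
    (j : Fin k)
    (p : ℕ → (Fin k → ℝ))
    (hp : ∀ ℓ : ℕ, p ℓ = fun j' => if j' = j then (ℓ : ℝ) / m else 1)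
    (w : ℕ → ℝ)
    (hw : ∀ ℓ : ℕ, w ℓ = if (ℓ : ℝ) / m < v {j} then (1 / m) / (v {j} - (ℓ : ℝ) / m) else 0)
    (b : Fin k → ℝ)
    (hbgrid : ∀ j' : Fin k, ∃ c : ℕ, b j' = (c : ℝ) / m)
    (hb0 : ∀ j' : Fin k, 0 ≤ b j') (hb1 : ∀ j' : Fin k, b j' ≤ 1)
    (hnob : ∀ q : Finset (Fin k), ∑ j' ∈ q, b j' ≤ v q) :
    ∑ ℓ ∈ Finset.range m, w ℓ * u b (p ℓ) = b j := by

  obtain ⟨c, hc⟩ := hbgrid j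
  have hmpos : (0:ℝ) < m := by exact_mod_cast Nat.pos_of_ne_zero (by omega)
  have hcm : c ≤ m := by
    have h1 := hb1 j
    rw [hc, div_le_one hmpos] at h1
    exact_mod_cast h1
  have hbv : b j ≤ v {j} := by simpa using hnob {j}
  have hterm : ∀ ℓ ∈ Finset.range m, w ℓ * u b (p ℓ) = if ℓ < c then 1/(m:ℝ) else 0 := by
    intro ℓ _
    have hfil : (Finset.univ.filter fun j' => p ℓ j' < b j') =
        if (ℓ:ℝ)/m < b j then ({j} : Finset (Fin k)) else (∅ : Finset (Fin k)) := by
      split_ifs with h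
      · ext j'
        simp only [hp, Finset.mem_filter, Finset.mem_univ, true_and, Finset.mem_singleton]
        by_cases hj' : j' = j
        · simp [hj', h]
        · simp [hj', not_lt.mpr (hb1 j')]
      · ext j'
        simp only [hp, Finset.mem_filter, Finset.mem_univ, true_and, Finset.notMem_empty,
          iff_false]
        by_cases hj' : j' = j
        · simp [hj', h]
        · simp [hj', not_lt.mpr (hb1 j')]
    by_cases hlt : ℓ < c
    · have hlt' : (ℓ:ℝ)/m < b j := by
        rw [hc]
        exact div_lt_div_of_pos_right (by exact_mod_cast hlt) hmpos
      have hltv : (ℓ:ℝ)/m < v {j} := lt_of_lt_of_le hlt' hbv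
      rw [hu, hfil, if_pos hlt', hw, if_pos hltv, if_pos hlt]
      rw [Finset.sum_singleton, hp]
      simp only [if_pos rfl, if_true]
      rw [div_mul_cancel₀]
      exact ne_of_gt (sub_pos.mpr hltv)
    · have hge : ¬ ((ℓ:ℝ)/m < b j) := by
        rw [hc, not_lt]
        gcongr
        exact_mod_cast not_lt.mp hlt
      rw [hu, hfil, if_neg hge, if_neg hlt]
      simp [hv0]
  rw [Finset.sum_congr rfl hterm]
  have hiff : ∀ ℓ : ℕ, (if ℓ < c then 1/(m:ℝ) else 0) =
      if ℓ ∈ Finset.range c then 1/(m:ℝ) else 0 := by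
    intro ℓ; simp [Finset.mem_range]
  simp only [hiff]
  have hinter : Finset.range m ∩ Finset.range c = Finset.range c := by
    ext x; simp only [Finset.mem_inter, Finset.mem_range]; omega
  rw [Finset.sum_ite_mem, hinter,
    Finset.sum_const, Finset.card_range, nsmul_eq_mul, hc]
  ring
end

section
/- (Monotone-gap price rounding) For every ε > 0, every integer k ≥ 1, and every vector a ∈ ℝ^k with 0 ≤ a_1 ≤ a_2 ≤ … ≤ a_k ≤ 1, there exist real numbers a'_1,…,a'_k such that: each a'_ℓ is an integer multiple of ε; a'_ℓ ≤ a_ℓ for every ℓ; a_ℓ − a'_ℓ ≥ a_{ℓ−1} − a'_{ℓ−1} for every ℓ ∈ {2,…,k}; and a_ℓ − a'_ℓ ≤ ℓ·ε for every ℓ. -/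
open Finset

/-- **Monotone-gap price rounding.**
For every `ε > 0`, `k ≥ 1`, and nondecreasing prices `0 ≤ a_1 ≤ … ≤ a_k ≤ 1`, there
exist rounded prices `a'_1, …, a'_k` such that each `a'_ℓ` is an integer multiple of
`ε`, `a'_ℓ ≤ a ℓ`, the discounts `a_ℓ − a'_ℓ` are nondecreasing in `ℓ`, and
`a_ℓ − a'_ℓ ≤ ℓ·ε` for every `ℓ ∈ {1,…,k}`. -/
theorem monotone_gap_price_rounding
    (ε : ℝ) (hε : 0 < ε)
    (k : ℕ) (hk : 1 ≤ k)
    (a : ℕ → ℝ)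
    (ha0 : 0 ≤ a 1) (hak : a k ≤ 1)
    (hmono : ∀ ℓ : ℕ, 1 ≤ ℓ → ℓ < k → a ℓ ≤ a (ℓ + 1)) :
    ∃ a' : ℕ → ℝ,
      (∀ ℓ ∈ Finset.Icc 1 k, ∃ z : ℤ, a' ℓ = (z : ℝ) * ε) ∧
      (∀ ℓ ∈ Finset.Icc 1 k, a' ℓ ≤ a ℓ) ∧
      (∀ ℓ : ℕ, 2 ≤ ℓ → ℓ ≤ k → a (ℓ - 1) - a' (ℓ - 1) ≤ a ℓ - a' ℓ) ∧
      (∀ ℓ ∈ Finset.Icc 1 k, a ℓ - a' ℓ ≤ (ℓ : ℝ) * ε) := by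
  refine ⟨fun ℓ => ((⌊a ℓ / ε⌋ : ℝ) - ((ℓ - 1 : ℕ) : ℝ)) * ε, ?_, ?_, ?_, ?_⟩
  · intro ℓ _
    exact ⟨⌊a ℓ / ε⌋ - (ℓ - 1 : ℕ), by push_cast; ring⟩
  · intro ℓ _
    have h1 : 0 ≤ a ℓ - ⌊a ℓ / ε⌋ * ε := Int.sub_floor_div_mul_nonneg (a ℓ) hε
    have h2 : (0 : ℝ) ≤ ((ℓ - 1 : ℕ) : ℝ) * ε := by positivity
    nlinarith
  · intro ℓ h2 hk'
    have e1 : ℓ - 1 - 1 = ℓ - 2 := by omega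
    have e2 : ((ℓ - 1 : ℕ) : ℝ) = (ℓ : ℝ) - 1 := by
      have : (1:ℕ) ≤ ℓ := by omega
      push_cast [this]; ring
    have e3 : ((ℓ - 2 : ℕ) : ℝ) = (ℓ : ℝ) - 2 := by
      push_cast [h2]; ring
    have h1 : a (ℓ - 1) - ⌊a (ℓ - 1) / ε⌋ * ε < ε :=
      Int.sub_floor_div_mul_lt (a (ℓ - 1)) hε
    have h2' : 0 ≤ a ℓ - ⌊a ℓ / ε⌋ * ε := Int.sub_floor_div_mul_nonneg (a ℓ) hε
    beta_reduce
    rw [e1, e2, e3]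
    nlinarith
  · intro ℓ hℓ
    simp only [Finset.mem_Icc] at hℓ
    have h1 : a ℓ - ⌊a ℓ / ε⌋ * ε < ε := Int.sub_floor_div_mul_lt (a ℓ) hε
    have e2 : ((ℓ - 1 : ℕ) : ℝ) = (ℓ : ℝ) - 1 := by
      push_cast [hℓ.1]; ring
    beta_reduce
    rw [e2]; nlinarith
end
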